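/- arXiv:1511.09435 — 5 statements merged into one kernel-verified Lean document; each statement's English description precedes it below -/
import Mathlib

section
/- Assume hypotheses (H). Then for every pair of vertices y, z of Γ at distance 2, the subgraph of Γ induced on the set of common neighbours of y and z is isomorphic to the 6-cycle C_6. -/
/-!
Let `w ∈ μ(y, z)` be a common neighbour of `y` and `z`. In the local grid `Γ(w)` the vertices
`y` and `z` are distinct and non-adjacent, so they lie in different rows and columns, and their
common neighbours are the other two corners of the rectangle they span, which are again
non-adjacent. Hence in the graph induced on `μ(y, z)` the neighbourhood of every vertex is a
non-edge. Such a graph is 2-regular and triangle-free, and on six vertices this forces a hexagon: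
if `w` has neighbours `a`, `b` and these have further neighbours `a'`, `b'`, then the sixth vertex
cannot be adjacent to the saturated `w`, `a`, `b`, so it is adjacent to both `a'` and `b'`.
-/

open SimpleGraph

/-- The `(n × m)`-grid: the Cartesian product of the complete graphs `K_n` and `K_m`. -/
def gridGraph (n m : ℕ) : SimpleGraph (Fin n × Fin m) where
  Adj a b := a ≠ b ∧ (a.1 = b.1 ∨ a.2 = b.2)
  symm := ⟨by intro a b h; exact ⟨h.1.symm, h.2.imp Eq.symm Eq.symm⟩⟩
  loopless := ⟨by intro a h; exact h.1 rfl⟩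

namespace SimpleGraph

variable {W U : Type*} {G : SimpleGraph W} {H : SimpleGraph U}

def IsNonEdge (G : SimpleGraph W) (s : Set W) : Prop :=
  ∃ a b, a ≠ b ∧ ¬G.Adj a b ∧ s = {a, b}

theorem IsNonEdge.ncard_eq_two {s : Set W} (h : G.IsNonEdge s) : s.ncard = 2 := by
  obtain ⟨a, b, hab, -, rfl⟩ := h
  exact Set.ncard_pair hab

theorem IsNonEdge.image (f : H ↪g G) {s : Set U} (h : H.IsNonEdge s) : G.IsNonEdge (f '' s) := by
  obtain ⟨a, b, hab, hnab, rfl⟩ := h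
  exact ⟨f a, f b, f.injective.ne hab, f.map_adj_iff.not.mpr hnab, Set.image_pair ..⟩

theorem IsNonEdge.preimage (f : H ↪g G) {s : Set W} (h : G.IsNonEdge s) (hs : s ⊆ Set.range f) :
    H.IsNonEdge (f ⁻¹' s) := by
  obtain ⟨_, _, hab, hnab, rfl⟩ := h
  obtain ⟨a, rfl⟩ := hs (Set.mem_insert _ _)
  obtain ⟨b, rfl⟩ := hs (Set.mem_insert_of_mem _ rfl)
  refine ⟨a, b, ne_of_apply_ne f hab, f.map_adj_iff.not.mp hnab, ?_⟩
  ext x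
  simp [f.injective.eq_iff]

theorem Embedding.image_commonNeighbors (f : H ↪g G) (u v : U) :
    f '' H.commonNeighbors u v = G.commonNeighbors (f u) (f v) ∩ Set.range f := by
  ext x
  constructor
  · rintro ⟨p, ⟨hu, hv⟩, rfl⟩
    exact ⟨⟨f.map_adj_iff.mpr hu, f.map_adj_iff.mpr hv⟩, p, rfl⟩
  · rintro ⟨⟨hu, hv⟩, p, rfl⟩
    exact ⟨p, ⟨f.map_adj_iff.mp hu, f.map_adj_iff.mp hv⟩, rfl⟩

theorem nonempty_iso_cycleGraph_of_equiv [Finite W] {k : ℕ} (e : Fin (k + 3) ≃ W)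
    (hdeg : ∀ w, (G.neighborSet w).ncard ≤ 2) (hadj : ∀ i, G.Adj (e i) (e (i + 1))) :
    Nonempty (G ≃g cycleGraph (k + 3)) := by
  have hnbr : ∀ i, G.neighborSet (e i) = e '' (cycleGraph (k + 3)).neighborSet i := by
    intro i
    have hsub : e '' (cycleGraph (k + 3)).neighborSet i ⊆ G.neighborSet (e i) := by
      rw [cycleGraph_neighborSet, Set.image_pair]
      rintro _ (rfl | rfl)
      · simpa using (hadj (i - 1)).symm
      · exact hadj i
    refine (Set.eq_of_subset_of_ncard_le hsub ?_).symm
    rw [Set.ncard_image_of_injective _ e.injective, cycleGraph_neighborSet, Set.ncard_pair]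
    · exact hdeg _
    · intro h
      rw [sub_eq_iff_eq_add, add_assoc, left_eq_add] at h
      simp [Fin.ext_iff, Fin.val_add, Nat.mod_eq_of_lt (by omega : 2 < k + 3)] at h
  refine ⟨(RelIso.mk e ?_).symm⟩
  intro i j
  change e j ∈ G.neighborSet (e i) ↔ j ∈ (cycleGraph (k + 3)).neighborSet i
  rw [hnbr, e.injective.mem_set_image]

theorem not_adj_of_adj_of_adj (hG : ∀ w, G.IsNonEdge (G.neighborSet w)) {w u v : W}
    (hu : G.Adj w u) (hv : G.Adj w v) (huv : u ≠ v) : ¬G.Adj u v := by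
  obtain ⟨a, b, -, hnab, hw⟩ := hG w
  have hu' : u ∈ G.neighborSet w := hu
  have hv' : v ∈ G.neighborSet w := hv
  rw [hw] at hu' hv'
  rcases hu' with rfl | rfl <;> rcases hv' with rfl | rfl
  all_goals first | exact absurd rfl huv | exact hnab | exact fun h => hnab h.symm

theorem exists_neighborSet_eq_pair_of_adj (hG : ∀ w, G.IsNonEdge (G.neighborSet w)) {w u : W}
    (h : G.Adj w u) : ∃ u', u' ≠ u ∧ G.neighborSet w = {u, u'} := by
  obtain ⟨a, b, hab, -, hw⟩ := hG w
  have hu : u ∈ G.neighborSet w := h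
  rw [hw] at hu
  rcases hu with rfl | rfl
  · exact ⟨b, hab.symm, hw⟩
  · exact ⟨a, hab, hw.trans (Set.pair_comm _ _)⟩

theorem injective_of_closed_nonbacktracking (hG : ∀ w, G.IsNonEdge (G.neighborSet w))
    {f : Fin 6 → W} (hadj : ∀ i, G.Adj (f i) (f (i + 1))) (hnb : ∀ i, f i ≠ f (i + 2)) :
    Function.Injective f := by
  have hadj2 : ∀ i, G.Adj (f (i + 1)) (f (i + 2)) := fun i => by
    simpa [add_assoc, one_add_one_eq_two] using hadj (i + 1)
  have htri : ∀ i, f i ≠ f (i + 3) := fun i h => by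
    refine not_adj_of_adj_of_adj hG (hadj i).symm (hadj2 i) (hnb i) ?_
    rw [h]
    simpa [add_assoc] using (hadj (i + 2)).symm
  intro i j h
  obtain ⟨d, rfl⟩ : ∃ d, j = i + d := ⟨j - i, by abel⟩
  rcases (by decide : ∀ d : Fin 6, d = 0 ∨ d = 1 ∨ d = 2 ∨ d = 3 ∨ d = 4 ∨ d = 5) d with
    rfl | rfl | rfl | rfl | rfl | rfl
  · simp
  · exact absurd h (hadj i).ne
  · exact absurd h (hnb i)
  · exact absurd h (htri i)
  · refine absurd h.symm ?_
    simpa [add_assoc] using hnb (i + 4)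
  · refine absurd h.symm ?_
    simpa [add_assoc] using (hadj (i + 5)).ne

theorem exists_adj_adj_of_card_eq_six [Finite W] (hcard : Nat.card W = 6)
    (hG : ∀ w, G.IsNonEdge (G.neighborSet w)) {w a b a' b' : W}
    (hw : G.neighborSet w = {a, b}) (hab : a ≠ b) (hnab : ¬G.Adj a b)
    (ha : G.neighborSet a = {w, a'}) (ha'w : a' ≠ w)
    (hb : G.neighborSet b = {w, b'}) (hb'w : b' ≠ w) :
    ∃ c, c ≠ a ∧ c ≠ b ∧ G.Adj c a' ∧ G.Adj c b' := by
  have haa' : G.Adj a a' := by simp [← mem_neighborSet, ha]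
  have hbb' : G.Adj b b' := by simp [← mem_neighborSet, hb]
  have ha'b : a' ≠ b := by rintro rfl; exact hnab haa'
  have hb'a : b' ≠ a := by rintro rfl; exact hnab hbb'.symm
  obtain ⟨c, -, hc⟩ : ∃ c ∈ Set.univ, c ∉ ({w, a, b, a', b'} : Set W) := by
    refine Set.exists_mem_notMem_of_ncard_lt_ncard ?_
    rw [Set.ncard_univ, hcard]
    grw [Set.ncard_insert_le, Set.ncard_insert_le, Set.ncard_insert_le, Set.ncard_insert_le,
      Set.ncard_singleton]
    norm_num
  simp only [Set.mem_insert_iff, Set.mem_singleton_iff, not_or] at hc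
  obtain ⟨hcw, hca, hcb, hca', hcb'⟩ := hc
  -- `w`, `a`, `b` already have both their neighbours, so those of `c` are the two vertices left.
  have hNc : G.neighborSet c = ({w, a, b, c} : Set W)ᶜ := by
    refine Set.eq_of_subset_of_ncard_le ?_ ?_
    · rintro x hx (rfl | rfl | rfl | rfl)
      · have : c ∈ G.neighborSet x := hx.symm
        simp [hw, hca, hcb] at this
      · have : c ∈ G.neighborSet x := hx.symm
        simp [ha, hcw, hca'] at this
      · have : c ∈ G.neighborSet x := hx.symm
        simp [hb, hcw, hcb'] at this
      · exact G.irrefl hx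
    · have hwa : G.Adj w a := by simp [← mem_neighborSet, hw]
      have hwb : G.Adj w b := by simp [← mem_neighborSet, hw]
      rw [(hG c).ncard_eq_two, Set.ncard_compl, hcard, Set.ncard_insert_of_notMem,
        Set.ncard_insert_of_notMem, Set.ncard_pair (Ne.symm hcb)]
      all_goals simp [hab, Ne.symm hcw, Ne.symm hca, hwa.ne, hwb.ne]
  refine ⟨c, hca, hcb, ?_, ?_⟩
  · simp [← mem_neighborSet, hNc, ha'w, haa'.ne.symm, ha'b, Ne.symm hca']
  · simp [← mem_neighborSet, hNc, hb'w, hb'a, hbb'.ne.symm, Ne.symm hcb']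

theorem exists_equiv_fin_six_adj_add_one [Finite W] (hcard : Nat.card W = 6)
    (hG : ∀ w, G.IsNonEdge (G.neighborSet w)) :
    ∃ e : Fin 6 ≃ W, ∀ i, G.Adj (e i) (e (i + 1)) := by
  obtain ⟨w⟩ : Nonempty W := Nat.card_pos_iff.mp (by omega) |>.1
  obtain ⟨a, b, hab, hnab, hw⟩ := hG w
  have hwa : G.Adj w a := by simp [← mem_neighborSet, hw]
  have hwb : G.Adj w b := by simp [← mem_neighborSet, hw]
  obtain ⟨a', ha'w, ha⟩ := exists_neighborSet_eq_pair_of_adj hG hwa.symm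
  obtain ⟨b', hb'w, hb⟩ := exists_neighborSet_eq_pair_of_adj hG hwb.symm
  have haa' : G.Adj a a' := by simp [← mem_neighborSet, ha]
  have hbb' : G.Adj b b' := by simp [← mem_neighborSet, hb]
  obtain ⟨c, hca, hcb, hca', hcb'⟩ :=
    exists_adj_adj_of_card_eq_six hcard hG hw hab hnab ha ha'w hb hb'w
  have ha'b' : a' ≠ b' := by
    rintro rfl
    have h3 : ({a, b, c} : Set W).ncard ≤ (G.neighborSet a').ncard :=
      Set.ncard_le_ncard (by simp [Set.insert_subset_iff, haa'.symm, hbb'.symm, hca'.symm])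
    rw [Set.ncard_eq_three.mpr ⟨a, b, c, hab, Ne.symm hca, Ne.symm hcb, rfl⟩,
      (hG a').ncard_eq_two] at h3
    omega
  let f : Fin 6 → W := ![w, a, a', c, b', b]
  have hadj : ∀ i, G.Adj (f i) (f (i + 1)) := by
    intro i; fin_cases i
    all_goals simp [f, hwa, haa', hca'.symm, hcb', hbb'.symm, hwb.symm]
  have hnb : ∀ i, f i ≠ f (i + 2) := by
    intro i; fin_cases i
    all_goals simp [f, Ne.symm ha'w, Ne.symm hca, ha'b', hcb, hb'w, Ne.symm hab]
  have hf := injective_of_closed_nonbacktracking hG hadj hnb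
  exact ⟨.ofBijective f (hf.bijective_of_nat_card_le (by simp [hcard])), hadj⟩

theorem nonempty_iso_cycleGraph_six_of_isNonEdge_neighborSet [Finite W]
    (hcard : Nat.card W = 6) (hG : ∀ w, G.IsNonEdge (G.neighborSet w)) :
    Nonempty (G ≃g cycleGraph 6) := by
  obtain ⟨e, he⟩ := exists_equiv_fin_six_adj_add_one hcard hG
  exact nonempty_iso_cycleGraph_of_equiv (k := 3) e (fun w => (hG w).ncard_eq_two.le) he

theorem isNonEdge_commonNeighbors_inter_neighborSet
    (hH : ∀ a b, a ≠ b → ¬H.Adj a b → H.IsNonEdge (H.commonNeighbors a b))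
    {w y z : W} (φ : G.induce (G.neighborSet w) ≃g H) (hy : G.Adj w y) (hz : G.Adj w z)
    (hyz : y ≠ z) (hnyz : ¬G.Adj y z) :
    G.IsNonEdge (G.commonNeighbors y z ∩ G.neighborSet w) := by
  let f : H ↪g G := (Embedding.induce _).comp φ.symm.toEmbedding
  have hf : Set.range f = G.neighborSet w := by
    ext x
    refine ⟨?_, fun hx => ⟨φ ⟨x, hx⟩, by simp [f]⟩⟩
    rintro ⟨p, rfl⟩
    exact (φ.symm p).2
  have hfy : f (φ ⟨y, hy⟩) = y := by simp [f]
  have hfz : f (φ ⟨z, hz⟩) = z := by simp [f]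
  rw [← hf, ← hfy, ← hfz, ← f.image_commonNeighbors]
  refine (hH _ _ ?_ ?_).image f
  · exact fun h => hyz (congrArg Subtype.val (φ.injective h))
  · exact fun h => hnyz (φ.map_adj_iff.mp h)

theorem isNonEdge_neighborSet_induce {S : Set W} {w : W} (hw : w ∈ S)
    (h : G.IsNonEdge (S ∩ G.neighborSet w)) :
    (G.induce S).IsNonEdge ((G.induce S).neighborSet ⟨w, hw⟩) := by
  have := h.preimage (Embedding.induce S) fun x hx => ⟨⟨x, hx.1⟩, rfl⟩
  convert this using 1
  ext ⟨x, hx⟩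
  simp [hx]

end SimpleGraph

theorem gridGraph_isNonEdge_commonNeighbors {n m : ℕ} {a b : Fin n × Fin m} (hab : a ≠ b)
    (h : ¬(gridGraph n m).Adj a b) :
    (gridGraph n m).IsNonEdge ((gridGraph n m).commonNeighbors a b) := by
  have h1 : a.1 ≠ b.1 := fun e => h ⟨hab, .inl e⟩
  have h2 : a.2 ≠ b.2 := fun e => h ⟨hab, .inr e⟩
  refine ⟨(a.1, b.2), (b.1, a.2), by simp [h1], ?_, ?_⟩
  · rintro ⟨-, e | e⟩
    exacts [h1 e, h2 e.symm]
  · ext ⟨c₁, c₂⟩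
    simp only [mem_commonNeighbors, gridGraph, Set.mem_insert_iff, Set.mem_singleton_iff,
      Prod.ext_iff]
    grind

theorem mu_graphs_are_hexagons_general (n m : ℕ)
    (V : Type) (Γ : SimpleGraph V)
    (hloc : ∀ x : V, Nonempty ((Γ.induce (Γ.neighborSet x)) ≃g gridGraph n m))
    (hc2 : ∀ x y : V, Γ.dist x y = 2 →
      {z : V | Γ.Adj x z ∧ Γ.Adj y z}.ncard = 6)
    :
    ∀ y z : V, Γ.dist y z = 2 →
      Nonempty ((Γ.induce {w : V | Γ.Adj y w ∧ Γ.Adj z w}) ≃g cycleGraph 6) := by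
  intro y z hyz
  have hne : y ≠ z := by rintro rfl; simp at hyz
  have hnadj : ¬Γ.Adj y z := by rw [← dist_eq_one_iff_adj]; omega
  change Nonempty (Γ.induce (Γ.commonNeighbors y z) ≃g _)
  have hμ : (Γ.commonNeighbors y z).ncard = 6 := hc2 y z hyz
  have : Finite (Γ.commonNeighbors y z) := (Set.finite_of_ncard_ne_zero (by omega)).to_subtype
  refine nonempty_iso_cycleGraph_six_of_isNonEdge_neighborSet
    (by rw [Nat.card_coe_set_eq, hμ]) ?_
  rintro ⟨w, hyw, hzw⟩
  obtain ⟨φ⟩ := hloc w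
  exact isNonEdge_neighborSet_induce _ <| isNonEdge_commonNeighbors_inter_neighborSet
    (fun _ _ => gridGraph_isNonEdge_commonNeighbors) φ hyw.symm hzw.symm hne hnadj

/-- Under hypotheses (H), the subgraph induced on the set of common
neighbours of any two vertices at distance 2 is a hexagon (the 6-cycle `C₆`). -/
theorem mu_graphs_are_hexagons (n m : ℕ) (hm : 3 ≤ m) (hmn : m ≤ n)
    (V : Type) [Fintype V] (Γ : SimpleGraph V)
    (hconn : Γ.Connected)
    (hdiam : ∃ x y : V, 2 ≤ Γ.dist x y)
    (hloc : ∀ x : V, Nonempty ((Γ.induce (Γ.neighborSet x)) ≃g gridGraph n m))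
    (hb0 : ∀ x : V, {y : V | Γ.Adj x y}.ncard = n * m)
    (hb1 : ∀ x y : V, Γ.Adj x y →
      {z : V | Γ.Adj y z ∧ Γ.dist x z = 2}.ncard = (n - 1) * (m - 1))
    (hb2 : ∀ x y : V, Γ.dist x y = 2 →
      {z : V | Γ.Adj y z ∧ Γ.dist x z = 3}.ncard = (n - 3) * (m - 3))
    (hc2 : ∀ x y : V, Γ.dist x y = 2 →
      {z : V | Γ.Adj x z ∧ Γ.Adj y z}.ncard = 6)
    :
    ∀ y z : V, Γ.dist y z = 2 →
      Nonempty ((Γ.induce {w : V | Γ.Adj y w ∧ Γ.Adj z w}) ≃g cycleGraph 6) :=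
  mu_graphs_are_hexagons_general n m V Γ hloc hc2
end

section
/- Assume hypotheses (H). Let x and z be vertices of Γ at distance 2 and let w be a neighbour of x. Then d(z,w) ≤ 2 if and only if w is a common neighbour of x and z, or w is adjacent to some common neighbour of x and z. -/
open SimpleGraph

/-!
Let `M` be the set of common neighbours of `x` and `z`. In the local grid at a vertex `b ∈ M`,
`x` and `z` are two non-collinear points, whose only common neighbours are two non-collinear
points; hence `M` contains no triangle. In the grid `Γ(x)` every line is a clique, so each line
meets the six points of `M` at most twice, and `M` spans at least three rows and three columns.
So at most `(n - 3) * (m - 3)` neighbours of `x` share no line with `M`, and these include the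
`(n - 3) * (m - 3)` neighbours of `x` at distance 3 from `z`. The two sets therefore coincide:
a neighbour of `x` that is neither adjacent to `z` nor to a vertex of `M` is at distance 3
from `z`.
-/

open Finset

namespace gridGraph

variable {n m : ℕ} {X Z U W : Fin n × Fin m}

lemma eq_or_eq_of_adj_of_adj (hXZ : X ≠ Z) (hn : ¬ (gridGraph n m).Adj X Z)
    (hXU : (gridGraph n m).Adj X U) (hUZ : (gridGraph n m).Adj U Z) :
    U = (X.1, Z.2) ∨ U = (Z.1, X.2) := by
  have h1 : X.1 ≠ Z.1 := fun h => hn ⟨hXZ, Or.inl h⟩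
  have h2 : X.2 ≠ Z.2 := fun h => hn ⟨hXZ, Or.inr h⟩
  rcases hXU.2 with h | h <;> rcases hUZ.2 with g | g
  · exact absurd (h.trans g) h1
  · exact Or.inl (Prod.ext h.symm g)
  · exact Or.inr (Prod.ext g h.symm)
  · exact absurd (h.trans g) h2

lemma not_adj_of_adj_of_adj (hXZ : X ≠ Z) (hn : ¬ (gridGraph n m).Adj X Z)
    (hXU : (gridGraph n m).Adj X U) (hUZ : (gridGraph n m).Adj U Z)
    (hXW : (gridGraph n m).Adj X W) (hWZ : (gridGraph n m).Adj W Z) :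
    ¬ (gridGraph n m).Adj U W := by
  have h1 : X.1 ≠ Z.1 := fun h => hn ⟨hXZ, Or.inl h⟩
  have h2 : X.2 ≠ Z.2 := fun h => hn ⟨hXZ, Or.inr h⟩
  rintro ⟨hUW, hline⟩
  rcases eq_or_eq_of_adj_of_adj hXZ hn hXU hUZ with rfl | rfl <;>
    rcases eq_or_eq_of_adj_of_adj hXZ hn hXW hWZ with rfl | rfl <;> simp_all [eq_comm]

end gridGraph

def gridOffLines {n m : ℕ} (A : Finset (Fin n × Fin m)) : Finset (Fin n × Fin m) :=
  (A.image Prod.fst)ᶜ ×ˢ (A.image Prod.snd)ᶜ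

lemma mem_gridOffLines_of_forall_not_adj {n m : ℕ} {A : Finset (Fin n × Fin m)}
    {q : Fin n × Fin m} (h : ∀ a ∈ A, q ≠ a ∧ ¬ (gridGraph n m).Adj q a) :
    q ∈ gridOffLines A := by
  simp only [gridOffLines, mem_product, mem_compl, mem_image, not_exists, not_and]
  exact ⟨fun a ha h1 => (h a ha).2 ⟨(h a ha).1, .inl h1.symm⟩,
    fun a ha h2 => (h a ha).2 ⟨(h a ha).1, .inr h2.symm⟩⟩

lemma card_gridOffLines {n m : ℕ} (A : Finset (Fin n × Fin m)) :
    #(gridOffLines A) = (n - #(A.image Prod.fst)) * (m - #(A.image Prod.snd)) := by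
  simp [gridOffLines, card_compl]

lemma Finset.card_filter_le_two_of_not_triangle {α β : Type*} {G : SimpleGraph α}
    {A : Finset α} (hA : ∀ a ∈ A, ∀ b ∈ A, ∀ c ∈ A, G.Adj a b → G.Adj a c → ¬ G.Adj b c)
    [DecidableEq β] (f : α → β) (hf : ∀ a b, a ≠ b → f a = f b → G.Adj a b) (y : β) :
    #{a ∈ A | f a = y} ≤ 2 := by
  by_contra! h
  obtain ⟨a, b, c, ha, hb, hc, hab, hac, hbc⟩ := two_lt_card_iff.mp h
  simp only [mem_filter] at ha hb hc
  exact hA a ha.1 b hb.1 c hc.1 (hf a b hab (ha.2.trans hb.2.symm))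
    (hf a c hac (ha.2.trans hc.2.symm)) (hf b c hbc (hb.2.trans hc.2.symm))

namespace SimpleGraph

variable {V V' : Type*} {Γ : SimpleGraph V} {G : SimpleGraph V'}

lemma exists_embedding_range_eq_neighborSet {x : V}
    (h : Nonempty (Γ.induce (Γ.neighborSet x) ≃g G)) :
    ∃ e : G ↪g Γ, Set.range e = Γ.neighborSet x := by
  obtain ⟨φ⟩ := h
  refine ⟨(Embedding.induce _).comp φ.symm.toEmbedding, Set.ext fun v => ⟨?_, fun hv => ?_⟩⟩
  · rintro ⟨p, rfl⟩
    exact (φ.symm p).2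
  · exact ⟨φ ⟨v, hv⟩, by simp⟩

lemma ncard_setOf_adj_and {x : V} {e : G ↪g Γ} (he : Set.range e = Γ.neighborSet x)
    [Fintype V'] (P : V → Prop) [DecidablePred P] :
    {v | Γ.Adj x v ∧ P v}.ncard = #{p | P (e p)} := by
  have : {v | Γ.Adj x v ∧ P v} = e '' ↑({p | P (e p)} : Finset V') := by
    ext v
    constructor
    · rintro ⟨hxv, hP⟩
      obtain ⟨p, rfl⟩ : v ∈ Set.range e := he ▸ hxv
      exact ⟨p, by simpa using hP, rfl⟩
    · rintro ⟨p, hp, rfl⟩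
      exact ⟨he.subset (Set.mem_range_self p), by simpa using hp⟩
  rw [this, Set.ncard_image_of_injective _ e.injective, Set.ncard_coe_finset]

lemma dist_le_two_of_adj_of_adj {u a v : V} (hua : Γ.Adj u a) (hav : Γ.Adj a v) :
    Γ.dist u v ≤ 2 :=
  dist_le (.cons hua (.cons hav .nil))

section LocallyGrid

variable {n m : ℕ} (hloc : ∀ b, Nonempty (Γ.induce (Γ.neighborSet b) ≃g gridGraph n m))
include hloc

lemma not_adj_of_mem_commonNeighbors {x z b u v : V} (hxz : x ≠ z) (hn : ¬ Γ.Adj x z)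
    (hb : b ∈ Γ.commonNeighbors x z) (hu : u ∈ Γ.commonNeighbors x z)
    (hv : v ∈ Γ.commonNeighbors x z) (hbu : Γ.Adj b u) (hbv : Γ.Adj b v) :
    ¬ Γ.Adj u v := by
  obtain ⟨e, he⟩ := exists_embedding_range_eq_neighborSet (hloc b)
  rw [mem_commonNeighbors] at hb hu hv
  obtain ⟨X, rfl⟩ : x ∈ Set.range e := he ▸ hb.1.symm
  obtain ⟨Z, rfl⟩ : z ∈ Set.range e := he ▸ hb.2.symm
  obtain ⟨U, rfl⟩ : u ∈ Set.range e := he ▸ hbu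
  obtain ⟨W, rfl⟩ : v ∈ Set.range e := he ▸ hbv
  rw [e.map_adj_iff, e.map_adj_iff] at hu hv
  rw [e.map_adj_iff] at hn ⊢
  exact gridGraph.not_adj_of_adj_of_adj (ne_of_apply_ne e hxz) hn hu.1 hu.2.symm hv.1 hv.2.symm

variable {x z : V}

section Chart

variable {e : gridGraph n m ↪g Γ} [DecidableRel Γ.Adj]

lemma card_gridOffLines_le (he : Set.range e = Γ.neighborSet x)
    (hmu : {v | Γ.Adj x v ∧ Γ.Adj z v}.ncard = 6) (hxz : x ≠ z) (hn : ¬ Γ.Adj x z) :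
    #(gridOffLines ({p | Γ.Adj z (e p)} : Finset _)) ≤ (n - 3) * (m - 3) := by
  set A : Finset (Fin n × Fin m) := {p | Γ.Adj z (e p)}
  have hA : #A = 6 := (ncard_setOf_adj_and he _).symm.trans hmu
  have hxe : ∀ p, Γ.Adj x (e p) := fun p => he.subset (Set.mem_range_self p)
  have htri : ∀ a ∈ A, ∀ b ∈ A, ∀ c ∈ A, (gridGraph n m).Adj a b →
      (gridGraph n m).Adj a c → ¬ (gridGraph n m).Adj b c := by
    intro a ha b hb c hc hab hac hbc
    simp only [A, mem_filter, mem_univ, true_and] at ha hb hc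
    rw [← e.map_adj_iff] at hab hac hbc
    exact not_adj_of_mem_commonNeighbors hloc hxz hn ⟨hxe a, ha⟩ ⟨hxe b, hb⟩ ⟨hxe c, hc⟩
      hab hac hbc
  have hrows : #A ≤ 2 * #(A.image Prod.fst) := card_le_mul_card_image A 2 fun r _ =>
    card_filter_le_two_of_not_triangle htri Prod.fst (fun _ _ hab h => ⟨hab, .inl h⟩) r
  have hcols : #A ≤ 2 * #(A.image Prod.snd) := card_le_mul_card_image A 2 fun c _ =>
    card_filter_le_two_of_not_triangle htri Prod.snd (fun _ _ hab h => ⟨hab, .inr h⟩) c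
  rw [card_gridOffLines]
  exact Nat.mul_le_mul (by omega) (by omega)

lemma filter_dist_eq_three_eq_gridOffLines (he : Set.range e = Γ.neighborSet x)
    (hfar : {v | Γ.Adj x v ∧ Γ.dist z v = 3}.ncard = (n - 3) * (m - 3))
    (hmu : {v | Γ.Adj x v ∧ Γ.Adj z v}.ncard = 6) (hxz : x ≠ z) (hn : ¬ Γ.Adj x z) :
    ({p | Γ.dist z (e p) = 3} : Finset _) = gridOffLines {p | Γ.Adj z (e p)} := by
  refine eq_of_subset_of_card_le (fun p hp => ?_) ?_
  · rw [mem_filter] at hp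
    refine mem_gridOffLines_of_forall_not_adj fun a ha => ⟨?_, fun hpa => ?_⟩
    · rintro rfl
      simp [dist_eq_one_iff_adj.mpr (mem_filter.mp ha).2] at hp
    · have := dist_le_two_of_adj_of_adj (mem_filter.mp ha).2 (e.map_adj_iff.mpr hpa).symm
      omega
  · rw [← ncard_setOf_adj_and he (Γ.dist z · = 3), hfar]
    exact card_gridOffLines_le hloc he hmu hxz hn

end Chart

lemma dist_eq_three_of_forall_not_adj {w : V}
    (hfar : {v | Γ.Adj x v ∧ Γ.dist z v = 3}.ncard = (n - 3) * (m - 3))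
    (hmu : {v | Γ.Adj x v ∧ Γ.Adj z v}.ncard = 6) (hxz : x ≠ z) (hn : ¬ Γ.Adj x z)
    (hw : Γ.Adj x w) (hzw : ¬ Γ.Adj z w) (hwM : ∀ u ∈ Γ.commonNeighbors x z, ¬ Γ.Adj w u) :
    Γ.dist z w = 3 := by
  classical
  obtain ⟨e, he⟩ := exists_embedding_range_eq_neighborSet (hloc x)
  obtain ⟨p, rfl⟩ : w ∈ Set.range e := he ▸ hw
  have hp : p ∈ gridOffLines ({q | Γ.Adj z (e q)} : Finset _) :=
    mem_gridOffLines_of_forall_not_adj fun a ha => by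
      rw [mem_filter] at ha
      refine ⟨?_, fun hpa => hwM (e a) ⟨he.subset (Set.mem_range_self a), ha.2⟩ ?_⟩
      · rintro rfl
        exact hzw ha.2
      · exact e.map_adj_iff.mpr hpa
  rw [← filter_dist_eq_three_eq_gridOffLines hloc he hfar hmu hxz hn, mem_filter] at hp
  exact hp.2

end LocallyGrid

end SimpleGraph

theorem dist_le_two_iff_near_mu_graph_general (n m : ℕ)
    (V : Type) (Γ : SimpleGraph V)
    (hloc : ∀ x : V, Nonempty ((Γ.induce (Γ.neighborSet x)) ≃g gridGraph n m))
    (hb2 : ∀ x y : V, Γ.dist x y = 2 →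
      {z : V | Γ.Adj y z ∧ Γ.dist x z = 3}.ncard = (n - 3) * (m - 3))
    (hc2 : ∀ x y : V, Γ.dist x y = 2 →
      {z : V | Γ.Adj x z ∧ Γ.Adj y z}.ncard = 6)
    (x z w : V) (hxz : Γ.dist x z = 2) (hw : Γ.Adj x w) :
    Γ.dist z w ≤ 2 ↔
      ((Γ.Adj x w ∧ Γ.Adj z w) ∨ ∃ u : V, Γ.Adj x u ∧ Γ.Adj z u ∧ Γ.Adj w u) := by
  have hne : x ≠ z := by rintro rfl; simp at hxz
  have hn : ¬ Γ.Adj x z := fun h => by simp [dist_eq_one_iff_adj.mpr h] at hxz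
  constructor
  · intro hd
    by_contra! h
    have := dist_eq_three_of_forall_not_adj hloc (hb2 z x (dist_comm.trans hxz))
      (hc2 x z hxz) hne hn hw (h.1 hw) fun u hu => h.2 u hu.1 hu.2
    omega
  · rintro (⟨-, hzw⟩ | ⟨u, -, hzu, hwu⟩)
    · exact (dist_eq_one_iff_adj.mpr hzw).trans_le one_le_two
    · exact dist_le_two_of_adj_of_adj hzu hwu.symm

/-- Under hypotheses (H): for vertices `x, z` at distance 2 and a
neighbour `w` of `x`, one has `d(z,w) ≤ 2` iff `w` is a common neighbour of `x` and `z`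
or `w` is adjacent to some common neighbour of `x` and `z`. -/
theorem dist_le_two_iff_near_mu_graph (n m : ℕ) (hm : 3 ≤ m) (hmn : m ≤ n)
    (V : Type) [Fintype V] (Γ : SimpleGraph V)
    (hconn : Γ.Connected)
    (hdiam : ∃ x y : V, 2 ≤ Γ.dist x y)
    (hloc : ∀ x : V, Nonempty ((Γ.induce (Γ.neighborSet x)) ≃g gridGraph n m))
    (hb0 : ∀ x : V, {y : V | Γ.Adj x y}.ncard = n * m)
    (hb1 : ∀ x y : V, Γ.Adj x y →
      {z : V | Γ.Adj y z ∧ Γ.dist x z = 2}.ncard = (n - 1) * (m - 1))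
    (hb2 : ∀ x y : V, Γ.dist x y = 2 →
      {z : V | Γ.Adj y z ∧ Γ.dist x z = 3}.ncard = (n - 3) * (m - 3))
    (hc2 : ∀ x y : V, Γ.dist x y = 2 →
      {z : V | Γ.Adj x z ∧ Γ.Adj y z}.ncard = 6)
    (x z w : V) (hxz : Γ.dist x z = 2) (hw : Γ.Adj x w) :
    Γ.dist z w ≤ 2 ↔
      ((Γ.Adj x w ∧ Γ.Adj z w) ∨ ∃ u : V, Γ.Adj x u ∧ Γ.Adj z u ∧ Γ.Adj w u) :=
  dist_le_two_iff_near_mu_graph_general n m V Γ hloc hb2 hc2 x z w hxz hw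
end

section
/- Let F be a finite field and let e ≥ d ≥ 2 be integers. Let Γ be the bilinear forms graph on e×d matrices over F. Then for any vertices x, y of Γ at distance j ≥ 2, the subgraph of Γ induced on the set of neighbours of x that are at distance j−1 from y is nonempty and connected. -/
open SimpleGraph

/-- The bilinear forms graph on `e × d` matrices over a field `F`:
two matrices are adjacent iff their difference has rank 1. -/
def bilGraph (F : Type) [Field F] (e d : ℕ) : SimpleGraph (Matrix (Fin e) (Fin d) F) where
  Adj A B := A ≠ B ∧ (A - B).rank = 1
  symm := by
    constructor
    intro A B h
    refine ⟨h.1.symm, ?_⟩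
    have hn : B - A = -(A - B) := by abel
    have hml : (-(A - B)).mulVecLin = -(A - B).mulVecLin := by
      ext v
      simp [Matrix.neg_mulVec]
    have hr : (-(A - B)).rank = (A - B).rank := by
      unfold Matrix.rank
      rw [hml, LinearMap.range_neg]
    rw [hn, hr]
    exact h.2
  loopless := by constructor; intro A h; exact h.1 rfl

/-!
Distance in the bilinear forms graph is the rank of the difference. With `M = x - y`, a neighbour
`w` of `x` lies at distance `rank M - 1` from `y` exactly when `x - w` is a Wedderburn rank-one
summand `(M z)(cᵀ M)` with `cᵀ M z = 1`. Two such summands that share the row `cᵀ M`, or share the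
column `M z` up to scale, differ by a matrix of rank at most one, so the corresponding neighbours
are equal or adjacent. Choosing a covector `c` that pairs nontrivially with both columns joins any
two of them in three steps.
-/

open Matrix Module Submodule

namespace Matrix

variable {m n K : Type*} [Fintype n] [Field K]

theorem rank_neg (A : Matrix m n K) : (-A).rank = A.rank := by
  have : (-A).mulVecLin = -A.mulVecLin := LinearMap.ext fun v => neg_mulVec v A
  rw [rank, rank, this, LinearMap.range_neg]

theorem rank_sub_comm (A B : Matrix m n K) : (A - B).rank = (B - A).rank := by
  rw [← neg_sub, rank_neg]

theorem rank_eq_zero_iff {A : Matrix m n K} : A.rank = 0 ↔ A = 0 := by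
  classical
  rw [rank, finrank_eq_zero, LinearMap.range_eq_bot, ← toLin'_apply', LinearEquiv.map_eq_zero_iff]

theorem rank_add_le (A B : Matrix m n K) : (A + B).rank ≤ A.rank + B.rank := by
  refine (finrank_mono ?_).trans (finrank_add_le_finrank_add_finrank _ _)
  rw [mulVecLin_add]
  exact LinearMap.range_add_le _ _

theorem range_mulVecLin_add_vecMulVec_le (A : Matrix m n K) (u : m → K) (v : n → K) :
    LinearMap.range (A + vecMulVec u v).mulVecLin ≤ LinearMap.range A.mulVecLin ⊔ K ∙ u := by
  rintro _ ⟨w, rfl⟩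
  rw [mulVecLin_apply, add_mulVec, vecMulVec_mulVec, op_smul_eq_smul]
  exact add_mem_sup (LinearMap.mem_range_self _ w) (smul_mem _ _ (mem_span_singleton_self u))

theorem mem_range_of_rank_sub_vecMulVec_lt {M : Matrix m n K} {u : m → K} {v : n → K}
    (h : (M - vecMulVec u v).rank < M.rank) : u ∈ LinearMap.range M.mulVecLin := by
  set A := M - vecMulVec u v
  have hle : LinearMap.range M.mulVecLin ≤ LinearMap.range A.mulVecLin ⊔ K ∙ u := by
    simpa [A] using range_mulVecLin_add_vecMulVec_le A u v
  have hspan : finrank K (K ∙ u) ≤ 1 := (finrank_le_one_iff_isPrincipal _).mpr ⟨u, rfl⟩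
  have heq : LinearMap.range M.mulVecLin = LinearMap.range A.mulVecLin ⊔ K ∙ u :=
    eq_of_le_of_finrank_le hle <| calc
      finrank K ↥(LinearMap.range A.mulVecLin ⊔ K ∙ u) ≤ A.rank + finrank K (K ∙ u) :=
        finrank_add_le_finrank_add_finrank _ _
      _ ≤ M.rank := by omega
  exact heq ▸ mem_sup_right (mem_span_singleton_self u)

theorem exists_eq_vecMulVec_of_rank_le_one {B : Matrix m n K} (h : B.rank ≤ 1) :
    ∃ u v, B = vecMulVec u v := by
  classical
  obtain ⟨u, hu⟩ := ((finrank_le_one_iff_isPrincipal _).mp h).principal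
  choose v hv using fun k => mem_span_singleton.mp
    (hu ▸ LinearMap.mem_range_self B.mulVecLin (Pi.single k 1))
  refine ⟨u, v, ext fun i k => ?_⟩
  simpa [vecMulVec_apply, mulVec_single, mul_comm] using (congrFun (hv k) i).symm

theorem rank_vecMulVec_smul_sub_vecMulVec_le (a : K) (u : m → K) (v v' : n → K) :
    (vecMulVec (a • u) v - vecMulVec u v').rank ≤ 1 := by
  rw [smul_vecMulVec, ← vecMulVec_smul, ← vecMulVec_sub]
  exact rank_vecMulVec_le _ _

variable [Fintype m]

def IsWedderburnSummand (M B : Matrix m n K) : Prop :=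
  ∃ z c, c ⬝ᵥ (M *ᵥ z) = 1 ∧ B = vecMulVec (M *ᵥ z) (Mᵀ *ᵥ c)

theorem rank_sub_vecMulVec_lt {M : Matrix m n K} {z : n → K} {c : m → K}
    (h : c ⬝ᵥ (M *ᵥ z) = 1) : (M - vecMulVec (M *ᵥ z) (Mᵀ *ᵥ c)).rank < M.rank := by
  set A := M - vecMulVec (M *ᵥ z) (Mᵀ *ᵥ c)
  have hA : ∀ w, A *ᵥ w = M *ᵥ (w - (c ⬝ᵥ (M *ᵥ w)) • z) := fun w => by
    rw [sub_mulVec, vecMulVec_mulVec, op_smul_eq_smul, mulVec_sub, mulVec_smul,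
      dotProduct_comm, dotProduct_transpose_mulVec]
  have hle : LinearMap.range A.mulVecLin ≤ LinearMap.range M.mulVecLin := by
    rintro _ ⟨w, rfl⟩
    exact ⟨_, (hA w).symm⟩
  have hker : ∀ y ∈ LinearMap.range A.mulVecLin, c ⬝ᵥ y = 0 := by
    rintro _ ⟨w, rfl⟩
    simp [hA, mulVec_sub, mulVec_smul, dotProduct_sub, dotProduct_smul, h]
  have hz : M *ᵥ z ∉ LinearMap.range A.mulVecLin := fun hz => by
    simpa [h] using hker _ hz
  exact finrank_lt_finrank_of_lt
    (SetLike.lt_iff_le_and_exists.mpr ⟨hle, _, LinearMap.mem_range_self _ z, hz⟩)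

theorem isWedderburnSummand_of_rank_sub_lt {M B : Matrix m n K} (hB : B.rank ≤ 1)
    (h : (M - B).rank < M.rank) : IsWedderburnSummand M B := by
  obtain ⟨u, v, rfl⟩ := exists_eq_vecMulVec_of_rank_le_one hB
  have hT : (Mᵀ - vecMulVec v u).rank < Mᵀ.rank := by
    rwa [← transpose_vecMulVec, ← transpose_sub, rank_transpose, rank_transpose]
  obtain ⟨z, rfl⟩ := mem_range_of_rank_sub_vecMulVec_lt h
  obtain ⟨c, rfl⟩ := mem_range_of_rank_sub_vecMulVec_lt hT
  refine ⟨z, c, ?_, rfl⟩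
  by_contra ht
  set A := M - vecMulVec (M *ᵥ z) (Mᵀ *ᵥ c)
  -- otherwise `A z = (1 - cᵀ M z) • M z` puts `M z`, hence all of `range M`, in `range A`
  have hAz : A *ᵥ z = (1 - c ⬝ᵥ (M *ᵥ z)) • (M *ᵥ z) := by
    rw [sub_mulVec, vecMulVec_mulVec, op_smul_eq_smul, dotProduct_comm,
      dotProduct_transpose_mulVec, sub_smul, one_smul]
  have hz : M *ᵥ z ∈ LinearMap.range A.mulVecLin := by
    refine ⟨(1 - c ⬝ᵥ (M *ᵥ z))⁻¹ • z, ?_⟩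
    rw [mulVecLin_apply, mulVec_smul, hAz, smul_smul,
      inv_mul_cancel₀ (sub_ne_zero.mpr (Ne.symm ht)), one_smul]
  have hle : LinearMap.range M.mulVecLin ≤ LinearMap.range A.mulVecLin := by
    simpa [A] using (range_mulVecLin_add_vecMulVec_le A (M *ᵥ z) (Mᵀ *ᵥ c)).trans
      (sup_le le_rfl ((span_singleton_le_iff_mem _ _).mpr hz))
  exact (finrank_mono hle).not_gt h

theorem isWedderburnSummand_iff {M B : Matrix m n K} :
    IsWedderburnSummand M B ↔ B.rank = 1 ∧ (M - B).rank + 1 = M.rank := by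
  have hsplit := rank_add_le (M - B) B
  rw [sub_add_cancel] at hsplit
  constructor
  · rintro ⟨z, c, h, rfl⟩
    have := rank_vecMulVec_le (M *ᵥ z) (Mᵀ *ᵥ c)
    have := rank_sub_vecMulVec_lt h
    omega
  · rintro ⟨h1, h2⟩
    exact isWedderburnSummand_of_rank_sub_lt h1.le (by omega)

theorem exists_isWedderburnSummand {M : Matrix m n K} (hM : M ≠ 0) :
    ∃ B, IsWedderburnSummand M B := by
  classical
  obtain ⟨i, k, hik⟩ : ∃ i k, M i k ≠ 0 := by
    contrapose! hM
    exact ext hM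
  exact ⟨_, (M i k)⁻¹ • Pi.single k 1, Pi.single i 1,
    by simp [mulVec_smul, mulVec_single, single_dotProduct, hik], rfl⟩

end Matrix

theorem exists_dotProduct_ne_zero_and_ne_zero {m R : Type*} [Fintype m]
    [NonUnitalNonAssocSemiring R]
    {c₁ c₂ u₁ u₂ : m → R} (h₁ : c₁ ⬝ᵥ u₁ ≠ 0) (h₂ : c₂ ⬝ᵥ u₂ ≠ 0) :
    ∃ c, c ⬝ᵥ u₁ ≠ 0 ∧ c ⬝ᵥ u₂ ≠ 0 := by
  by_cases h₁₂ : c₁ ⬝ᵥ u₂ = 0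
  · by_cases h₂₁ : c₂ ⬝ᵥ u₁ = 0
    · exact ⟨c₁ + c₂, by simpa [add_dotProduct, h₂₁], by simpa [add_dotProduct, h₁₂]⟩
    · exact ⟨c₂, h₂₁, h₂⟩
  · exact ⟨c₁, h₁, h₁₂⟩

section BilinearFormsGraph

variable {F : Type} [Field F] {e d : ℕ}

theorem bilGraph_adj_iff {A B : Matrix (Fin e) (Fin d) F} :
    (bilGraph F e d).Adj A B ↔ (A - B).rank = 1 :=
  ⟨And.right, fun h => ⟨by rintro rfl; simp at h, h⟩⟩

theorem rank_sub_le_length {A B : Matrix (Fin e) (Fin d) F} (p : (bilGraph F e d).Walk A B) :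
    (A - B).rank ≤ p.length := by
  induction p with
  | nil => simp
  | cons h p ih =>
    rw [Walk.length_cons, ← sub_add_sub_cancel]
    exact (rank_add_le _ _).trans (by rw [h.2]; omega)

theorem exists_walk_length_eq_rank_sub (A B : Matrix (Fin e) (Fin d) F) :
    ∃ p : (bilGraph F e d).Walk A B, p.length = (A - B).rank := by
  induction hr : (A - B).rank generalizing A with
  | zero =>
    rw [Matrix.rank_eq_zero_iff, sub_eq_zero] at hr
    subst hr
    exact ⟨.nil, rfl⟩
  | succ r ih =>
    obtain ⟨W, hW⟩ := exists_isWedderburnSummand (M := A - B) (by rintro h; simp [h] at hr)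
    obtain ⟨hW1, hWr⟩ := isWedderburnSummand_iff.mp hW
    obtain ⟨p, hp⟩ := ih (A - W) (by rw [sub_right_comm]; omega)
    exact ⟨.cons (bilGraph_adj_iff.mpr (by rwa [sub_sub_cancel])) p, by simp [hp]⟩

theorem bilGraph_dist (A B : Matrix (Fin e) (Fin d) F) :
    (bilGraph F e d).dist A B = (A - B).rank := by
  obtain ⟨p, hp⟩ := exists_walk_length_eq_rank_sub A B
  obtain ⟨q, hq⟩ := p.reachable.exists_walk_length_eq_dist
  exact le_antisymm (hp ▸ dist_le p) (hq ▸ rank_sub_le_length q)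

theorem reachable_induce_of_rank_sub_le_one {S : Set (Matrix (Fin e) (Fin d) F)} {a b : S}
    (h : ((a : Matrix (Fin e) (Fin d) F) - b).rank ≤ 1) :
    ((bilGraph F e d).induce S).Reachable a b := by
  rcases Nat.le_one_iff_eq_zero_or_eq_one.mp h with h0 | h1
  · rw [Matrix.rank_eq_zero_iff, sub_eq_zero, ← Subtype.ext_iff] at h0
    rw [h0]
  · exact Adj.reachable (bilGraph_adj_iff.mpr h1)

theorem preconnected_induce_isWedderburnSummand_sub (x M : Matrix (Fin e) (Fin d) F) :
    ((bilGraph F e d).induce {w | IsWedderburnSummand M (x - w)}).Preconnected := by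
  set S := {w | IsWedderburnSummand M (x - w)}
  rintro ⟨w₁, hS₁⟩ ⟨w₂, hS₂⟩
  obtain ⟨z₁, c₁, h₁, hw₁⟩ := hS₁
  obtain ⟨z₂, c₂, h₂, hw₂⟩ := hS₂
  obtain ⟨c, hc₁, hc₂⟩ :=
    exists_dotProduct_ne_zero_and_ne_zero (h₁ ▸ one_ne_zero) (h₂ ▸ one_ne_zero)
  let pt (z : Fin d → F) : Matrix (Fin e) (Fin d) F :=
    x - vecMulVec ((c ⬝ᵥ (M *ᵥ z))⁻¹ • M *ᵥ z) (Mᵀ *ᵥ c)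
  have hpt (z : Fin d → F) (hz : c ⬝ᵥ (M *ᵥ z) ≠ 0) : pt z ∈ S :=
    ⟨(c ⬝ᵥ (M *ᵥ z))⁻¹ • z, c, by simp [mulVec_smul, hz], by simp [pt, mulVec_smul]⟩
  have to_pt (w : Matrix (Fin e) (Fin d) F) (hw : w ∈ S) (z : Fin d → F) (c' : Fin e → F)
      (hwz : x - w = vecMulVec (M *ᵥ z) (Mᵀ *ᵥ c')) (hz : c ⬝ᵥ (M *ᵥ z) ≠ 0) :
      ((bilGraph F e d).induce S).Reachable ⟨w, hw⟩ ⟨pt z, hpt z hz⟩ := by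
    refine reachable_induce_of_rank_sub_le_one (show (w - pt z).rank ≤ 1 from ?_)
    rw [← sub_sub_sub_cancel_left (pt z) w x, hwz, sub_sub_cancel]
    exact rank_vecMulVec_smul_sub_vecMulVec_le _ _ _ _
  have between :
      ((bilGraph F e d).induce S).Reachable ⟨pt z₁, hpt z₁ hc₁⟩ ⟨pt z₂, hpt z₂ hc₂⟩ := by
    refine reachable_induce_of_rank_sub_le_one (show (pt z₁ - pt z₂).rank ≤ 1 from ?_)
    rw [← sub_sub_sub_cancel_left (pt z₂) (pt z₁) x, sub_sub_cancel, sub_sub_cancel,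
      ← sub_vecMulVec]
    exact rank_vecMulVec_le _ _
  exact ((to_pt w₁ _ z₁ c₁ hw₁ hc₁).trans between).trans
    (to_pt w₂ _ z₂ c₂ hw₂ hc₂).symm

end BilinearFormsGraph

theorem bil_c_graph_connected_general (F : Type) [Field F] (e d : ℕ)
    (x y : Matrix (Fin e) (Fin d) F) (j : ℕ) (hj : 2 ≤ j)
    (hxy : (bilGraph F e d).dist x y = j) :
    {w : Matrix (Fin e) (Fin d) F |
        (bilGraph F e d).Adj x w ∧ (bilGraph F e d).dist y w = j - 1}.Nonempty ∧
      ((bilGraph F e d).induce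
        {w : Matrix (Fin e) (Fin d) F |
          (bilGraph F e d).Adj x w ∧ (bilGraph F e d).dist y w = j - 1}).Connected := by
  rw [bilGraph_dist] at hxy
  have hS : {w | (bilGraph F e d).Adj x w ∧ (bilGraph F e d).dist y w = j - 1} =
      {w | IsWedderburnSummand (x - y) (x - w)} := by
    ext w
    rw [Set.mem_ofPred_eq, Set.mem_ofPred_eq, isWedderburnSummand_iff, bilGraph_adj_iff,
      bilGraph_dist, sub_sub_sub_cancel_left, rank_sub_comm y, hxy]
    omega
  have hM : x - y ≠ 0 := by
    rintro h
    rw [h, rank_zero] at hxy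
    omega
  obtain ⟨B, hB⟩ := exists_isWedderburnSummand hM
  have hne : {w | IsWedderburnSummand (x - y) (x - w)}.Nonempty := ⟨x - B, by simpa⟩
  rw [hS]
  have := hne.to_subtype
  exact ⟨hne, ⟨preconnected_induce_isWedderburnSummand_sub x (x - y)⟩⟩

/-- In the bilinear forms graph on `e × d` matrices over a finite field
(`e ≥ d ≥ 2`), for vertices `x, y` at distance `j ≥ 2`, the subgraph induced on the
neighbours of `x` at distance `j - 1` from `y` is nonempty and connected. -/
theorem bil_c_graph_connected (F : Type) [Field F] [Fintype F]
    (e d : ℕ) (hd : 2 ≤ d) (hde : d ≤ e)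
    (x y : Matrix (Fin e) (Fin d) F) (j : ℕ) (hj : 2 ≤ j)
    (hxy : (bilGraph F e d).dist x y = j) :
    {w : Matrix (Fin e) (Fin d) F |
        (bilGraph F e d).Adj x w ∧ (bilGraph F e d).dist y w = j - 1}.Nonempty ∧
      ((bilGraph F e d).induce
        {w : Matrix (Fin e) (Fin d) F |
          (bilGraph F e d).Adj x w ∧ (bilGraph F e d).dist y w = j - 1}).Connected :=
  bil_c_graph_connected_general F e d x y j hj hxy
end

section
/- There exists no finite simple graph whose real adjacency matrix has characteristic polynomial (X − 10)·(X − 3)^{13}·(X + 1)^{7}·(X + 3)^{14} (equivalently, no graph on 35 vertices with spectrum [10]^1, [3]^{13}, [−1]^{7}, [−3]^{14}). -/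
/-!
The 35 eigenvalues satisfy `∑ μ² = 350 = 10 · 35`, while `trace A² = ∑ deg v`; so the average
degree equals the largest eigenvalue `10`, and the equality case of the Rayleigh bound
`1ᵀ A 1 ≤ 10 · 1ᵀ1` makes the all-ones vector an eigenvector: `G` is `10`-regular. Since `10` is
a simple eigenvalue, the Hoffman polynomial `q = (X - 3)(X + 1)(X + 3)`, which kills every other
eigenvalue, gives `q(A) = (q(10) / 35) J` with `q(10) = 1001`. But `q(A)` has integer entries
and `35 ∤ 1001`.
-/

open SimpleGraph Polynomial
open scoped Classical

open scoped Classical in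
/-- The (real) adjacency matrix of a finite simple graph. -/
noncomputable def adjMat {W : Type} [Fintype W] (G : SimpleGraph W) : Matrix W W ℝ :=
  Matrix.of fun a b => if G.Adj a b then 1 else 0

/-- `η` is a non-principal eigenvalue of the finite graph `G`: a real eigenvalue of the
adjacency matrix admitting an eigenvector orthogonal to the all-ones vector. -/
def IsNonprincipalEigenvalue {W : Type} [Fintype W] (G : SimpleGraph W) (η : ℝ) : Prop :=
  ∃ v : W → ℝ, v ≠ 0 ∧ (adjMat G).mulVec v = η • v ∧ ∑ w : W, v w = 0

theorem existsUnique_of_count_map_univ_eq_one {ι α : Type*} [Fintype ι] [DecidableEq α]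
    {f : ι → α} {a : α} (h : (Finset.univ.val.map f).count a = 1) : ∃! i, f i = a := by
  rw [Multiset.count_map, Multiset.card_eq_one] at h
  obtain ⟨i₀, hi₀⟩ := h
  have hmem (i : ι) : i ∈ Multiset.filter (a = f ·) Finset.univ.val ↔ i = i₀ := by
    rw [hi₀, Multiset.mem_singleton]
  simp only [Multiset.mem_filter, Finset.mem_univ_val, true_and] at hmem
  exact ⟨i₀, ((hmem i₀).mpr rfl).symm, fun i hi => (hmem i).mp hi.symm⟩

namespace Matrix

theorem aeval_mulVec_of_mulVec_eq_smul {R n : Type*} [CommRing R] [Fintype n] [DecidableEq n]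
    {A : Matrix n n R} {v : n → R} {a : R} (hv : A *ᵥ v = a • v) (p : R[X]) :
    aeval A p *ᵥ v = p.eval a • v := by
  have hpow (k : ℕ) : (A ^ k) *ᵥ v = a ^ k • v := by
    induction k with
    | zero => simp
    | succ k ih => rw [pow_succ, ← mulVec_mulVec, hv, mulVec_smul, ih, smul_smul, pow_succ']
  induction p using Polynomial.induction_on' with
  | add p q hp hq => simp [add_mulVec, hp, hq, add_smul]
  | monomial k c =>
    rw [aeval_monomial, eval_monomial, Algebra.algebraMap_eq_smul_one, smul_mul_assoc, one_mul,
      smul_mulVec, hpow, smul_smul]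

namespace IsHermitian

variable {n : Type*} [Fintype n] [DecidableEq n] {A : Matrix n n ℝ} (hA : A.IsHermitian)
include hA

theorem map_eigenvalues_eq_of_charpoly_eq {M : Multiset ℝ}
    (h : A.charpoly = (M.map (X - C ·)).prod) : Finset.univ.val.map hA.eigenvalues = M := by
  simpa [h, roots_multiset_prod_X_sub_C] using hA.roots_charpoly_eq_eigenvalues.symm

theorem eq_sum_eigenvectorBasis (x : n → ℝ) :
    x = ∑ i, (⇑(hA.eigenvectorBasis i) ⬝ᵥ x) • ⇑(hA.eigenvectorBasis i) := by
  have h := congrArg WithLp.ofLp (hA.eigenvectorBasis.sum_repr' (WithLp.toLp 2 x))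
  simp only [WithLp.ofLp_sum, WithLp.ofLp_smul, EuclideanSpace.inner_eq_star_dotProduct] at h
  simpa [dotProduct_comm] using h.symm

theorem eigenvectorBasis_dotProduct_self (i : n) :
    ⇑(hA.eigenvectorBasis i) ⬝ᵥ ⇑(hA.eigenvectorBasis i) = 1 := by
  have h := (orthonormal_iff_ite.mp hA.eigenvectorBasis.orthonormal) i i
  rwa [if_pos rfl, EuclideanSpace.inner_eq_star_dotProduct, star_trivial] at h

theorem aeval_eq_sum_vecMulVec (p : ℝ[X]) :
    aeval A p = ∑ i, p.eval (hA.eigenvalues i) •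
      vecMulVec ⇑(hA.eigenvectorBasis i) ⇑(hA.eigenvectorBasis i) := by
  refine ext_of_mulVec_single fun j => ?_
  conv_lhs => rw [hA.eq_sum_eigenvectorBasis (Pi.single j 1)]
  simp only [mulVec_sum, mulVec_smul,
    aeval_mulVec_of_mulVec_eq_smul (hA.mulVec_eigenvectorBasis _), sum_mulVec, smul_mulVec,
    vecMulVec_mulVec, op_smul_eq_smul, smul_smul, mul_comm]

theorem trace_aeval (p : ℝ[X]) : (aeval A p).trace = ∑ i, p.eval (hA.eigenvalues i) := by
  simp [hA.aeval_eq_sum_vecMulVec, trace_sum, trace_vecMulVec,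
    hA.eigenvectorBasis_dotProduct_self]

theorem mulVec_eq_smul_of_dotProduct_mulVec_eq {r : ℝ} (hle : ∀ i, hA.eigenvalues i ≤ r)
    {x : n → ℝ} (hx : x ⬝ᵥ A *ᵥ x = r * (x ⬝ᵥ x)) : A *ᵥ x = r • x := by
  have hpsd : (algebraMap ℝ _ r - A).PosSemidef := by
    refine posSemidef_iff_isHermitian_and_spectrum_nonneg.mpr ⟨?_, ?_⟩
    · exact (IsSelfAdjoint.algebraMap _ (.all r)).sub hA
    · rw [← spectrum.singleton_sub_eq, hA.spectrum_real_eq_range_eigenvalues]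
      rintro _ ⟨_, rfl, _, ⟨i, rfl⟩, rfl⟩
      simpa using hle i
  have hzero : (algebraMap ℝ _ r - A) *ᵥ x = 0 := (hpsd.dotProduct_mulVec_zero_iff x).mp <| by
    rw [star_trivial, sub_mulVec, dotProduct_sub, hx, Algebra.algebraMap_eq_smul_one, smul_mulVec,
      one_mulVec, dotProduct_smul, smul_eq_mul, sub_self]
  rwa [sub_mulVec, sub_eq_zero, eq_comm, Algebra.algebraMap_eq_smul_one, smul_mulVec,
    one_mulVec] at hzero

theorem aeval_eq_smul_vecMulVec_one {p : ℝ[X]} {i₀ : n}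
    (hp : ∀ i ≠ i₀, p.eval (hA.eigenvalues i) = 0) (h1 : A *ᵥ 1 = hA.eigenvalues i₀ • 1) :
    aeval A p = (p.eval (hA.eigenvalues i₀) / Fintype.card n) • vecMulVec 1 1 := by
  -- Only the `i₀` term of the spectral decomposition survives; evaluating at `1` then shows that
  -- `1` is parallel to the unit eigenvector `u`, so that `u uᵀ = J / n`.
  set u := ⇑(hA.eigenvectorBasis i₀)
  set c := p.eval (hA.eigenvalues i₀)
  have hrank_one : aeval A p = c • vecMulVec u u := by
    rw [hA.aeval_eq_sum_vecMulVec,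
      Finset.sum_eq_single i₀ (fun i _ hi => by rw [hp i hi, zero_smul]) (by simp)]
  rcases eq_or_ne c 0 with hc | hc
  · simp [hrank_one, hc]
  have hu : (u ⬝ᵥ 1) • u = 1 := by
    have h := aeval_mulVec_of_mulVec_eq_smul h1 p
    rw [hrank_one, smul_mulVec, vecMulVec_mulVec, op_smul_eq_smul] at h
    exact smul_right_injective _ hc h
  have hcard : (Fintype.card n : ℝ) = (u ⬝ᵥ 1) * (u ⬝ᵥ 1) := by
    calc (Fintype.card n : ℝ) = (1 : n → ℝ) ⬝ᵥ 1 := by simp [dotProduct]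
      _ = ((u ⬝ᵥ 1) • u) ⬝ᵥ ((u ⬝ᵥ 1) • u) := by rw [hu]
      _ = _ := by
        rw [smul_dotProduct, dotProduct_smul, hA.eigenvectorBasis_dotProduct_self, smul_eq_mul,
          smul_eq_mul, mul_one]
  have hs : u ⬝ᵥ 1 ≠ 0 := by
    rintro hs
    rw [hs, mul_zero, Nat.cast_eq_zero, Fintype.card_eq_zero_iff] at hcard
    exact hcard.false i₀
  rw [hrank_one, ← hu, smul_vecMulVec, vecMulVec_smul, smul_smul, smul_smul, hcard]
  field_simp

end IsHermitian
end Matrix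

namespace SimpleGraph

open Matrix

variable {V : Type*} [Fintype V] (G : SimpleGraph V) [DecidableRel G.Adj]

theorem trace_adjMatrix_mul_self {α : Type*} [NonAssocSemiring α] :
    (G.adjMatrix α * G.adjMatrix α).trace = G.adjMatrix α *ᵥ 1 ⬝ᵥ 1 := by
  simp only [Matrix.trace, diag_apply, adjMatrix_mul_self_apply_self]
  rw [← natCast_card_dart_eq_dotProduct, dart_card_eq_sum_degrees, Nat.cast_sum]

theorem aeval_adjMatrix_eq_map_intCast {α : Type*} [Ring α] [DecidableEq V] (p : ℤ[X]) :
    aeval (G.adjMatrix α) p = (aeval (G.adjMatrix ℤ) p).map (Int.cast : ℤ → α) := by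
  have h : G.adjMatrix α = (Int.castRingHom α).mapMatrix.toIntAlgHom (G.adjMatrix ℤ) := by
    ext v w
    by_cases hvw : G.Adj v w <;> simp [hvw]
  rw [h, aeval_algHom_apply]
  rfl

variable {G}

theorem isRegularOfDegree_of_sum_sq_eigenvalues [DecidableEq V]
    (hA : (G.adjMatrix ℝ).IsHermitian) {k : ℕ} (hle : ∀ i, hA.eigenvalues i ≤ k)
    (hsum : ∑ i, hA.eigenvalues i ^ 2 = k * Fintype.card V) : G.IsRegularOfDegree k := by
  have hrayleigh : G.adjMatrix ℝ *ᵥ 1 ⬝ᵥ 1 = k * ((1 : V → ℝ) ⬝ᵥ 1) := by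
    have htr := hA.trace_aeval (X ^ 2)
    rw [map_pow, aeval_X, sq, trace_adjMatrix_mul_self] at htr
    rw [htr]
    simpa [dotProduct] using hsum
  have hreg := hA.mulVec_eq_smul_of_dotProduct_mulVec_eq hle <| by
    rwa [dotProduct_comm] at hrayleigh
  intro v
  simpa using congrFun hreg v

theorem card_dvd_eval_of_isRegularOfDegree [DecidableEq V]
    (hA : (G.adjMatrix ℝ).IsHermitian) {k : ℕ} (hreg : G.IsRegularOfDegree k) {i₀ : V}
    (hi₀ : hA.eigenvalues i₀ = k) {p : ℤ[X]} (hp : ∀ i ≠ i₀, aeval (hA.eigenvalues i) p = 0) :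
    (Fintype.card V : ℤ) ∣ p.eval (k : ℤ) := by
  have h1 : G.adjMatrix ℝ *ᵥ 1 = hA.eigenvalues i₀ • 1 := by
    ext v
    simpa [hi₀] using adjMatrix_mulVec_const_apply_of_regular hreg (a := (1 : ℝ)) (v := v)
  have hN := hA.aeval_eq_smul_vecMulVec_one (p := p.map (algebraMap ℤ ℝ))
    (by simpa only [eval_map_algebraMap] using hp) h1
  rw [aeval_map_algebraMap, aeval_adjMatrix_eq_map_intCast, eval_map_algebraMap, hi₀] at hN
  have hentry := congrFun (congrFun hN i₀) i₀
  have hk : aeval (k : ℝ) p = ((p.eval (k : ℤ) : ℤ) : ℝ) := by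
    simpa using aeval_algebraMap_apply_eq_algebraMap_eval (A := ℝ) (k : ℤ) p
  simp only [map_apply, Matrix.smul_apply, vecMulVec_apply, Pi.one_apply, mul_one, smul_eq_mul,
    hk] at hentry
  refine ⟨aeval (G.adjMatrix ℤ) p i₀ i₀, ?_⟩
  have hcard : (Fintype.card V : ℝ) ≠ 0 :=
    Nat.cast_ne_zero.mpr (Fintype.card_pos_iff.mpr ⟨i₀⟩).ne'
  rw [eq_div_iff hcard] at hentry
  exact_mod_cast hentry.symm.trans (mul_comm _ _)

end SimpleGraph

/-- No finite simple graph has adjacency matrix with characteristic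
polynomial `(X - 10)(X - 3)^13 (X + 1)^7 (X + 3)^14`, i.e. no graph has spectrum
`[10]^1, [3]^13, [-1]^7, [-3]^14`. -/
theorem no_graph_with_spectrum_10_3_m1_m3 (V : Type) [Fintype V] (G : SimpleGraph V) :
    (adjMat G).charpoly ≠
      (X - C 10) * (X - C 3) ^ 13 * (X + C 1) ^ 7 * (X + C 3) ^ 14 := by
  intro h
  have hA := G.isHermitian_adjMatrix ℝ
  set M : Multiset ℝ := {10} + .replicate 13 3 + .replicate 7 (-1) + .replicate 14 (-3)
  have hM : Finset.univ.val.map hA.eigenvalues = M := hA.map_eigenvalues_eq_of_charpoly_eq <| by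
    rw [show G.adjMatrix ℝ = adjMat G from rfl, h]
    simp only [M, Multiset.map_add, Multiset.prod_add, Multiset.map_singleton,
      Multiset.prod_singleton, Multiset.map_replicate, Multiset.prod_replicate, C_neg,
      sub_neg_eq_add]
  have hcard : Fintype.card V = 35 := by simpa [M] using congrArg Multiset.card hM
  have hvals (i : V) : hA.eigenvalues i = 10 ∨ hA.eigenvalues i = 3 ∨ hA.eigenvalues i = -1 ∨
      hA.eigenvalues i = -3 := by
    have h := hM ▸ Multiset.mem_map_of_mem hA.eigenvalues (Finset.mem_univ_val i)
    simp only [M, Multiset.mem_add, Multiset.mem_singleton, Multiset.mem_replicate] at h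
    tauto
  obtain ⟨i₀, hi₀, hunique⟩ : ∃! i, hA.eigenvalues i = 10 := by
    refine existsUnique_of_count_map_univ_eq_one ?_
    simp only [hM, M, Multiset.count_add, Multiset.count_singleton, Multiset.count_replicate]
    norm_num
  have hsq : ∑ i, hA.eigenvalues i ^ 2 = (M.map (· ^ 2)).sum := by
    rw [← hM, Multiset.map_map]
    rfl
  have hreg : G.IsRegularOfDegree 10 := by
    refine isRegularOfDegree_of_sum_sq_eigenvalues hA (fun i => ?_) ?_
    · rcases hvals i with h | h | h | h <;> rw [h] <;> norm_num
    · simp only [hsq, hcard, M, Multiset.map_add, Multiset.sum_add, Multiset.map_singleton,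
        Multiset.sum_singleton, Multiset.map_replicate, Multiset.sum_replicate, nsmul_eq_mul]
      norm_num
  have hdvd := card_dvd_eval_of_isRegularOfDegree hA hreg hi₀
    (p := (X - C 3) * (X + C 1) * (X + C 3)) fun i hi => by
      rcases hvals i with h | h | h | h
      · exact absurd (hunique i h) hi
      all_goals norm_num [h, map_ofNat]
  rw [hcard] at hdvd
  norm_num at hdvd
end

section
/- Let F be a finite field with q elements and let e ≥ d ≥ 2 be integers. Then every maximal clique of the bilinear forms graph Bil_q(e×d) has cardinality q^e or q^d, and maximal cliques of both cardinalities exist. -/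
open SimpleGraph

/-- `A` is a maximal clique of `Γ`. -/
def IsMaxClique {V : Type} (Γ : SimpleGraph V) (A : Set V) : Prop :=
  Γ.IsClique A ∧ ∀ B : Set V, Γ.IsClique B → A ⊆ B → B = A

/-!
A nonzero matrix at rank distance one from `0` is some `u vᵀ`, and two such matrices
`u₁ v₁ᵀ`, `u₂ v₂ᵀ` are at rank distance `≤ 1` only if `u₁ ∥ u₂` or `v₁ ∥ v₂`: otherwise the
difference maps onto the plane spanned by `u₁` and `u₂`. Hence a clique through `0` lies in
`{u wᵀ}` or in `{w vᵀ}` for fixed nonzero `u` or `v`. Both sets are cliques, of sizes `q^d` and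
`q^e`, and each is maximal once `w` ranges over a space of dimension at least `2`. Translations
are automorphisms of the graph and transposition identifies `Bil(e×d)` with `Bil(d×e)`, so every
maximal clique is a translate of one of these two kinds.
-/

open Matrix Module Submodule SimpleGraph

theorem Submodule.mem_span_singleton_symm {K V : Type*} [DivisionRing K] [AddCommGroup V]
    [Module K V] {x y : V} (hx : x ≠ 0) (h : x ∈ K ∙ y) : y ∈ K ∙ x := by
  obtain ⟨a, rfl⟩ := mem_span_singleton.mp h
  have ha : a ≠ 0 := by rintro rfl; exact hx (zero_smul K y)
  exact mem_span_singleton.mpr ⟨a⁻¹, inv_smul_smul₀ ha y⟩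

theorem Submodule.exists_notMem_span_singleton {K V : Type*} [DivisionRing K] [AddCommGroup V]
    [Module K V] [FiniteDimensional K V] (hV : 1 < finrank K V) (b : V) : ∃ w, w ∉ K ∙ b := by
  refine SetLike.exists_not_mem_of_ne_top _ fun htop => ?_
  have := finrank_span_le_card (R := K) ({b} : Set V)
  rw [htop, finrank_top, Set.toFinset_singleton, Finset.card_singleton] at this
  omega

namespace Matrix

variable {F : Type*} [Field F] {m n : Type*} [Fintype n]

theorem rank_vecMulVec_of_ne_zero [Fintype m] {u : m → F} {v : n → F} (hu : u ≠ 0)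
    (hv : v ≠ 0) : (vecMulVec u v).rank = 1 := by
  refine le_antisymm (rank_vecMulVec_le u v) ?_
  obtain ⟨j, hj⟩ := Function.ne_iff.mp hv
  have hcol : (vecMulVec u v).col j = v j • u := by ext; simp [vecMulVec_apply, mul_comm]
  rw [rank_eq_finrank_span_cols, Nat.one_le_iff_ne_zero, Ne, Submodule.finrank_eq_zero,
    span_eq_bot]
  exact fun h => smul_ne_zero hj hu (hcol ▸ h _ ⟨j, rfl⟩)

theorem exists_vecMulVec_eq_of_rank_eq_one [Fintype m] {A : Matrix m n F} (h : A.rank = 1) :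
    ∃ u v, A = vecMulVec u v := by
  rw [rank_eq_finrank_span_cols] at h
  obtain ⟨u, -, hspan⟩ := finrank_eq_one_iff'.mp h
  choose c hc using fun j => hspan ⟨A.col j, subset_span ⟨j, rfl⟩⟩
  refine ⟨u, c, ext fun i j => ?_⟩
  simpa [vecMulVec_apply, mul_comm] using (congrFun (congrArg Subtype.val (hc j)) i).symm

theorem exists_dotProduct_eq_of_linearIndependent {ι : Type*} [Fintype ι] {v : ι → n → F}
    (hv : LinearIndependent F v) (c : ι → F) : ∃ x, ∀ i, v i ⬝ᵥ x = c i := by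
  have hrank : (of v).rank = Fintype.card ι := hv.rank_matrix
  have hsurj : LinearMap.range (of v).mulVecLin = ⊤ := by
    apply Submodule.eq_top_of_finrank_eq
    rw [← Matrix.rank, hrank, Module.finrank_fintype_fun_eq_card]
  obtain ⟨x, hx⟩ := LinearMap.range_eq_top.mp hsurj c
  exact ⟨x, fun i => congrFun hx i⟩

theorem two_le_rank_vecMulVec_sub_vecMulVec {u₁ u₂ : m → F} {v₁ v₂ : n → F}
    (hu : LinearIndependent F ![u₁, u₂]) (hv : LinearIndependent F ![v₁, v₂]) :
    2 ≤ (vecMulVec u₁ v₁ - vecMulVec u₂ v₂).rank := by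
  set A := vecMulVec u₁ v₁ - vecMulVec u₂ v₂
  have hA : ∀ x, A *ᵥ x = (v₁ ⬝ᵥ x) • u₁ - (v₂ ⬝ᵥ x) • u₂ := fun x => by
    simp only [A, sub_mulVec, vecMulVec_mulVec, op_smul_eq_smul]
  obtain ⟨x, hx⟩ := exists_dotProduct_eq_of_linearIndependent hv ![1, 0]
  obtain ⟨y, hy⟩ := exists_dotProduct_eq_of_linearIndependent hv ![0, -1]
  have hrange : span F (Set.range ![u₁, u₂]) ≤ LinearMap.range A.mulVecLin := by
    have hx₁ : v₁ ⬝ᵥ x = 1 := hx 0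
    have hx₂ : v₂ ⬝ᵥ x = 0 := hx 1
    have hy₁ : v₁ ⬝ᵥ y = 0 := hy 0
    have hy₂ : v₂ ⬝ᵥ y = -1 := hy 1
    rw [span_le, Set.range_subset_iff]
    intro i
    fin_cases i
    · exact ⟨x, by simp [hA, hx₁, hx₂]⟩
    · exact ⟨y, by simp [hA, hy₁, hy₂]⟩
  calc 2 = Set.finrank F (Set.range ![u₁, u₂]) := by
        simpa using linearIndependent_iff_card_eq_finrank_span.mp hu
    _ ≤ A.rank := Submodule.finrank_mono hrange

theorem mem_span_or_mem_span_of_rank_sub_le_one {u₁ u₂ : m → F} {v₁ v₂ : n → F}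
    (hu₁ : u₁ ≠ 0) (hv₁ : v₁ ≠ 0) (h : (vecMulVec u₁ v₁ - vecMulVec u₂ v₂).rank ≤ 1) :
    u₂ ∈ F ∙ u₁ ∨ v₂ ∈ F ∙ v₁ := by
  by_contra! hnot
  have hu := (LinearIndependent.pair_iff' hu₁).mpr fun a ha =>
    hnot.1 (mem_span_singleton.mpr ⟨a, ha⟩)
  have hv := (LinearIndependent.pair_iff' hv₁).mpr fun a ha =>
    hnot.2 (mem_span_singleton.mpr ⟨a, ha⟩)
  have := two_le_rank_vecMulVec_sub_vecMulVec hu hv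
  omega

end Matrix

namespace SimpleGraph

variable {V W : Type*} {G : SimpleGraph V} {H : SimpleGraph W}

theorem IsClique.image_iso {A : Set V} (hA : G.IsClique A) (φ : G ≃g H) :
    H.IsClique (φ '' A) := by
  rintro _ ⟨x, hx, rfl⟩ _ ⟨y, hy, rfl⟩ hxy
  exact φ.map_adj_iff.mpr (hA hx hy fun h => hxy (congrArg φ h))

end SimpleGraph

section MaxClique

variable {V W : Type} {G : SimpleGraph V} {H : SimpleGraph W} {A : Set V}

theorem IsMaxClique.image_iso (hA : IsMaxClique G A) (φ : G ≃g H) : IsMaxClique H (φ '' A) := by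
  refine ⟨hA.1.image_iso φ, fun B hB hAB => ?_⟩
  have hA' : A ⊆ φ.symm '' B := fun x hx => ⟨φ x, hAB ⟨x, hx, rfl⟩, φ.symm_apply_apply x⟩
  rw [← hA.2 _ (hB.image_iso φ.symm) hA', Set.image_image]
  simp

theorem IsMaxClique.nonempty [Nonempty V] (hA : IsMaxClique G A) : A.Nonempty := by
  obtain ⟨x⟩ := ‹Nonempty V›
  rw [Set.nonempty_iff_ne_empty]
  rintro rfl
  exact Set.singleton_ne_empty x (hA.2 {x} (isClique_singleton x) (Set.empty_subset _))

end MaxClique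

namespace bilGraph

variable {F : Type} [Field F] {e d : ℕ}

def transposeIso : bilGraph F e d ≃g bilGraph F d e where
  toEquiv := (transposeAddEquiv (Fin e) (Fin d) F).toEquiv
  map_rel_iff' {A B} := by
    simp [bilGraph, ← transpose_sub, rank_transpose]

def addRightIso (C : Matrix (Fin e) (Fin d) F) : bilGraph F e d ≃g bilGraph F e d where
  toEquiv := Equiv.addRight C
  map_rel_iff' := by simp [bilGraph]

theorem rank_sub_le_one_of_mem {S : Set (Matrix (Fin e) (Fin d) F)}
    (hS : (bilGraph F e d).IsClique S) {M N : Matrix (Fin e) (Fin d) F} (hM : M ∈ S)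
    (hN : N ∈ S) : (M - N).rank ≤ 1 := by
  obtain rfl | hMN := eq_or_ne M N
  · simp
  · exact (hS hM hN hMN).2.le

theorem exists_vecMulVec_eq_of_mem {S : Set (Matrix (Fin e) (Fin d) F)}
    (hS : (bilGraph F e d).IsClique S) (h0 : 0 ∈ S) {P : Matrix (Fin e) (Fin d) F}
    (hP : P ∈ S) : ∃ p q, P = vecMulVec p q := by
  obtain rfl | hP0 := eq_or_ne P 0
  · exact ⟨0, 0, by simp⟩
  · exact exists_vecMulVec_eq_of_rank_eq_one (by simpa using (hS hP h0 hP0).2)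

end bilGraph

section Cliques

variable {F : Type} [Field F] {e d : ℕ}

def colClique (u : Fin e → F) : Set (Matrix (Fin e) (Fin d) F) :=
  Set.range (vecMulVec u)

def rowClique (v : Fin d → F) : Set (Matrix (Fin e) (Fin d) F) :=
  Set.range (vecMulVec · v)

theorem zero_mem_colClique (u : Fin e → F) : (0 : Matrix (Fin e) (Fin d) F) ∈ colClique u :=
  ⟨0, ext fun _ _ => mul_zero _⟩

theorem vecMulVec_mem_colClique {u a : Fin e → F} (ha : a ∈ F ∙ u) (b : Fin d → F) :
    vecMulVec a b ∈ colClique u := by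
  obtain ⟨c, rfl⟩ := mem_span_singleton.mp ha
  exact ⟨c • b, by simp⟩

theorem vecMulVec_mem_rowClique {v b : Fin d → F} (hb : b ∈ F ∙ v) (a : Fin e → F) :
    vecMulVec a b ∈ rowClique v := by
  obtain ⟨c, rfl⟩ := mem_span_singleton.mp hb
  exact ⟨c • a, by simp⟩

theorem rowClique_eq_image_transposeIso (v : Fin d → F) :
    (rowClique v : Set (Matrix (Fin e) (Fin d) F)) = bilGraph.transposeIso '' colClique v := by
  simp [rowClique, colClique, ← Set.range_comp, Function.comp_def, bilGraph.transposeIso]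

theorem isClique_colClique {u : Fin e → F} (hu : u ≠ 0) :
    (bilGraph F e d).IsClique (colClique u) := by
  rintro _ ⟨w, rfl⟩ _ ⟨w', rfl⟩ hne
  refine ⟨hne, ?_⟩
  rw [← vecMulVec_sub]
  exact rank_vecMulVec_of_ne_zero hu (sub_ne_zero.mpr fun h => hne (h ▸ rfl))

theorem isClique_rowClique {v : Fin d → F} (hv : v ≠ 0) :
    (bilGraph F e d).IsClique (rowClique v) := by
  rw [rowClique_eq_image_transposeIso]
  exact (isClique_colClique hv).image_iso _

theorem ncard_colClique [Fintype F] {u : Fin e → F} (hu : u ≠ 0) :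
    (colClique u : Set (Matrix (Fin e) (Fin d) F)).ncard = Fintype.card F ^ d := by
  obtain ⟨i, hi⟩ := Function.ne_iff.mp hu
  have hinj : Function.Injective (vecMulVec u : (Fin d → F) → _) := fun w w' h =>
    funext fun j => mul_left_cancel₀ hi (congrFun (congrFun h i) j)
  rw [colClique, Set.ncard_range_of_injective hinj, Nat.card_eq_fintype_card,
    Fintype.card_fun, Fintype.card_fin]

theorem ncard_rowClique [Fintype F] {v : Fin d → F} (hv : v ≠ 0) :
    (rowClique v : Set (Matrix (Fin e) (Fin d) F)).ncard = Fintype.card F ^ e := by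
  rw [rowClique_eq_image_transposeIso, Set.ncard_image_of_injective _ (RelIso.injective _),
    ncard_colClique hv]

theorem isMaxClique_colClique {u : Fin e → F} (hu : u ≠ 0) (hd : 2 ≤ d) :
    IsMaxClique (bilGraph F e d) (colClique u) := by
  refine ⟨isClique_colClique hu, fun B hB hsub => Set.Subset.antisymm (fun N hN => ?_) hsub⟩
  obtain ⟨a, b, rfl⟩ := bilGraph.exists_vecMulVec_eq_of_mem hB (hsub (zero_mem_colClique u)) hN
  by_contra hNu
  have ha : a ∉ F ∙ u := fun ha => hNu (vecMulVec_mem_colClique ha b)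
  have ha0 : a ≠ 0 := by rintro rfl; exact ha (zero_mem _)
  have hb0 : b ≠ 0 := by rintro rfl; exact hNu ⟨0, ext fun _ _ => by simp [vecMulVec_apply]⟩
  obtain ⟨w, hw⟩ := exists_notMem_span_singleton (K := F) (by rw [finrank_fin_fun]; omega) b
  rcases mem_span_or_mem_span_of_rank_sub_le_one ha0 hb0
      (bilGraph.rank_sub_le_one_of_mem hB hN (hsub ⟨w, rfl⟩)) with hua | hwb
  · exact ha (mem_span_singleton_symm hu hua)
  · exact hw hwb

theorem isMaxClique_rowClique {v : Fin d → F} (hv : v ≠ 0) (he : 2 ≤ e) :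
    IsMaxClique (bilGraph F e d) (rowClique v) := by
  rw [rowClique_eq_image_transposeIso]
  exact (isMaxClique_colClique hv he).image_iso _

end Cliques

section Classification

variable {F : Type} [Field F] {e d : ℕ} {S : Set (Matrix (Fin e) (Fin d) F)}

theorem subset_rowClique_of_vecMulVec_mem (hS : (bilGraph F e d).IsClique S) (h0 : 0 ∈ S)
    {u a : Fin e → F} {v : Fin d → F} (hu : u ≠ 0) (hv : v ≠ 0) (ha : a ∉ F ∙ u)
    (hM : vecMulVec u v ∈ S) (hN : vecMulVec a v ∈ S) : S ⊆ rowClique v := by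
  intro P hP
  obtain ⟨p, q, rfl⟩ := bilGraph.exists_vecMulVec_eq_of_mem hS h0 hP
  have ha0 : a ≠ 0 := by rintro rfl; exact ha (zero_mem _)
  rcases mem_span_or_mem_span_of_rank_sub_le_one hu hv
      (bilGraph.rank_sub_le_one_of_mem hS hM hP) with hpu | hqv
  · rcases mem_span_or_mem_span_of_rank_sub_le_one ha0 hv
        (bilGraph.rank_sub_le_one_of_mem hS hN hP) with hpa | hqv
    · obtain rfl | hp0 := eq_or_ne p 0
      · exact ⟨0, by simp⟩
      · exact absurd (mem_span_singleton_trans (mem_span_singleton_symm hp0 hpa) hpu) ha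
    · exact vecMulVec_mem_rowClique hqv p
  · exact vecMulVec_mem_rowClique hqv p

theorem exists_subset_colClique_or_rowClique (hS : (bilGraph F e d).IsClique S) (h0 : 0 ∈ S)
    (he : e ≠ 0) : (∃ u ≠ 0, S ⊆ colClique u) ∨ ∃ v ≠ 0, S ⊆ rowClique v := by
  by_cases hS0 : S ⊆ {0}
  · refine Or.inl ⟨Pi.single ⟨0, by omega⟩ 1, by simp, ?_⟩
    simpa using hS0.trans (Set.singleton_subset_iff.mpr (zero_mem_colClique _))
  obtain ⟨M, hM, hM0⟩ := Set.not_subset.mp hS0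
  obtain ⟨u, v, rfl⟩ := bilGraph.exists_vecMulVec_eq_of_mem hS h0 hM
  have hu : u ≠ 0 := by rintro rfl; simp at hM0
  have hv : v ≠ 0 := by rintro rfl; exact hM0 (ext fun _ _ => mul_zero _)
  by_cases hSu : S ⊆ colClique u
  · exact Or.inl ⟨u, hu, hSu⟩
  obtain ⟨N, hN, hNu⟩ := Set.not_subset.mp hSu
  obtain ⟨a, b, rfl⟩ := bilGraph.exists_vecMulVec_eq_of_mem hS h0 hN
  have ha : a ∉ F ∙ u := fun ha => hNu (vecMulVec_mem_colClique ha b)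
  obtain ⟨c, rfl⟩ := mem_span_singleton.mp <| (mem_span_or_mem_span_of_rank_sub_le_one hu hv
    (bilGraph.rank_sub_le_one_of_mem hS hM hN)).resolve_left ha
  have hca : c • a ∉ F ∙ u := fun hca => hNu (by simpa using vecMulVec_mem_colClique hca v)
  exact Or.inr ⟨v, hv, subset_rowClique_of_vecMulVec_mem hS h0 hu hv hca hM (by simpa using hN)⟩

theorem IsMaxClique.eq_colClique_or_eq_rowClique (hS : IsMaxClique (bilGraph F e d) S)
    (h0 : 0 ∈ S) (he : e ≠ 0) : (∃ u ≠ 0, S = colClique u) ∨ ∃ v ≠ 0, S = rowClique v := by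
  rcases exists_subset_colClique_or_rowClique hS.1 h0 he with ⟨u, hu, hSu⟩ | ⟨v, hv, hSv⟩
  · exact Or.inl ⟨u, hu, (hS.2 _ (isClique_colClique hu) hSu).symm⟩
  · exact Or.inr ⟨v, hv, (hS.2 _ (isClique_rowClique hv) hSv).symm⟩

theorem IsMaxClique.ncard_eq [Fintype F] {A : Set (Matrix (Fin e) (Fin d) F)}
    (hA : IsMaxClique (bilGraph F e d) A) (he : e ≠ 0) :
    A.ncard = Fintype.card F ^ e ∨ A.ncard = Fintype.card F ^ d := by
  obtain ⟨M, hM⟩ := hA.nonempty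
  let φ := bilGraph.addRightIso (-M)
  have h0 : 0 ∈ φ '' A := ⟨M, hM, add_neg_cancel M⟩
  rw [← Set.ncard_image_of_injective A φ.injective]
  rcases (hA.image_iso φ).eq_colClique_or_eq_rowClique h0 he with ⟨u, hu, h⟩ | ⟨v, hv, h⟩
  · exact Or.inr (h ▸ ncard_colClique hu)
  · exact Or.inl (h ▸ ncard_rowClique hv)

end Classification

/-- In the bilinear forms graph `Bil_q(e × d)` over a finite field with
`q` elements (`e ≥ d ≥ 2`), every maximal clique has cardinality `q^e` or `q^d`, and both
cardinalities occur. -/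
theorem bil_maximal_cliques (F : Type) [Field F] [Fintype F] (q : ℕ)
    (hq : Fintype.card F = q) (e d : ℕ) (hd : 2 ≤ d) (hde : d ≤ e) :
    (∀ A : Set (Matrix (Fin e) (Fin d) F), IsMaxClique (bilGraph F e d) A →
      A.ncard = q ^ e ∨ A.ncard = q ^ d) ∧
    (∃ A : Set (Matrix (Fin e) (Fin d) F), IsMaxClique (bilGraph F e d) A ∧
      A.ncard = q ^ e) ∧
    (∃ A : Set (Matrix (Fin e) (Fin d) F), IsMaxClique (bilGraph F e d) A ∧
      A.ncard = q ^ d) := by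
  subst hq
  have he : 2 ≤ e := hd.trans hde
  refine ⟨fun A hA => hA.ncard_eq (by omega), ?_, ?_⟩
  · exact ⟨rowClique (Pi.single ⟨0, by omega⟩ 1), isMaxClique_rowClique (by simp) he,
      ncard_rowClique (by simp)⟩
  · exact ⟨colClique (Pi.single ⟨0, by omega⟩ 1), isMaxClique_colClique (by simp) hd,
      ncard_colClique (by simp)⟩
end
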